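/- arXiv:1309.3636 — 8 statements merged into one kernel-verified Lean document; each statement's English description precedes it below -/
import Mathlib

section
/- Let G be a solvable group. Then every nonprincipal strongly productive ultrafilter on G is regular, and consequently every strongly productive ultrafilter on G is idempotent. -/
/- Semigroup structure on ultrafilters: `A ∈ p * q ↔ {x | {y | x * y ∈ A} ∈ q} ∈ p`. -/
attribute [local instance] Ultrafilter.semigroup

/-- `FP x` (from Mathlib's `Hindman.FP`) is the set of products `∏_{i ∈ a} x i`, taken in
increasing order of indices, where `a` ranges over finite nonempty subsets of `ℕ`.
An ultrafilter `p` on a semigroup `S` is *strongly productive* if every member of `p` contains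
a set of the form `FP x` that itself belongs to `p`. -/
def StronglyProductive {S : Type*} [Semigroup S] (p : Ultrafilter S) : Prop :=
  ∀ A ∈ p, ∃ x : Stream' S, Hindman.FP x ⊆ A ∧ Hindman.FP x ∈ p

/-- A (nonprincipal strongly productive) ultrafilter `p` is *regular* if some `B ∈ p` has the
property that for every sequence `x` with `FP x ⊆ B`, the set `x₀ · FP₁ x` is not in `p`. -/
def RegularSP {S : Type*} [Semigroup S] (p : Ultrafilter S) : Prop :=
  ∃ B ∈ p, ∀ x : Stream' S, Hindman.FP x ⊆ B →
    (x.head * ·) '' Hindman.FP x.tail ∉ p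

/-!
On a commutative group, a nonprincipal ultrafilter `p` contains a set `B` omitting `1`, containing
no pair `b, b²` and no pair `b, b⁻¹` with `b ≠ b⁻¹`. Such sets come from a Zorn argument for
injective maps (inversion, and squaring modulo the `2`-primary component) and from the parity of
`log₂ (orderOf b)`, which squaring flips on the `2`-primary component. If `x₀ · FP₁(x) ∈ p` with
`FP(x) ⊆ B`, strong productivity gives `x₀ c₀ c₁ = c₂` with `cᵢ ∈ FP₁(x)`; cancelling common
indices leaves `∏ K * (∏ D)² = ∏ R` with `0 ∈ K` and `K` disjoint from `D` and `R`, and each case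
exhibits a forbidden configuration in `B`.

Regularity passes from `N` and `G ⧸ N` to `G`: a principal strongly productive ultrafilter is
`pure 1`, so either the image of `p` in `G ⧸ N` is nonprincipal, or `p` lives on `N`. Finally, if
`FP(x) ∈ p` lies in a regularity witness, all tails `FP(x.drop k)` stay in `p`, whence `p * p = p`.
-/
open Function Set Hindman

namespace Ultrafilter

variable {α : Type*}

theorem singleton_mem_iff {p : Ultrafilter α} {a : α} : {a} ∈ p ↔ p = pure a :=
  ⟨fun h => eq_of_le (Filter.le_pure_iff.2 h), fun h => h ▸ rfl⟩

theorem exists_mem_forall_apply_mem_imp_eq {f : α → α} (hf : Injective f) (p : Ultrafilter α) :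
    ∃ B ∈ p, ∀ b ∈ B, f b ∈ B → f b = b := by
  -- For a maximal `A` with `f '' A ∩ A = ∅`, each non-fixed point is in `A`, `f ⁻¹' A` or `f '' A`.
  obtain ⟨A, hA⟩ := zorn_subset {A : Set α | ∀ a ∈ A, f a ∉ A} fun c hc hchain => by
    refine ⟨⋃₀ c, ?_, fun s => subset_sUnion_of_mem⟩
    rintro a ⟨s, hs, has⟩ ⟨t, ht, hat⟩
    rcases hchain.total hs ht with hst | hts
    · exact hc ht a (hst has) hat
    · exact hc hs a has (hts hat)
  have hcover : {x | f x = x} ∪ A ∪ f ⁻¹' A ∪ f '' A ∈ p := by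
    refine Filter.mem_of_superset Filter.univ_mem fun x _ => ?_
    by_contra hx
    simp only [mem_union, mem_ofPred_eq, mem_preimage, mem_image, not_or, not_exists,
      not_and] at hx
    obtain ⟨⟨⟨hfix, hxA⟩, hfxA⟩, himg⟩ := hx
    refine hxA (hA.mem_of_prop_insert fun a ha hfa => ?_)
    rcases ha with rfl | ha <;> rcases hfa with hfa | hfa
    exacts [hfix hfa, hfxA hfa, himg a ha hfa, hA.prop a ha hfa]
  simp only [union_mem_iff] at hcover
  rcases hcover with ((hfix | hA') | hpre) | himg
  · exact ⟨_, hfix, fun b hb _ => hb⟩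
  · exact ⟨A, hA', fun b hb hfb => (hA.prop b hb hfb).elim⟩
  · exact ⟨_, hpre, fun b hb hfb => (hA.prop _ hb hfb).elim⟩
  · refine ⟨_, himg, ?_⟩
    rintro _ ⟨a, ha, rfl⟩ ⟨a', ha', hfa'⟩
    exact (hA.prop a ha (hf hfa' ▸ ha')).elim

end Ultrafilter

namespace Hindman

section Semigroup

variable {M N F : Type*} [Semigroup M] [Semigroup N] [FunLike F M N] [MulHomClass F M N]

theorem FP_map (f : F) (x : Stream' M) : FP (x.map f) = f '' FP x := by
  ext y
  constructor
  · intro hy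
    generalize hz : x.map f = z at hy
    induction hy generalizing x with
    | head' z => subst hz; exact ⟨x.head, FP.head x, rfl⟩
    | tail' z m _ ih =>
      subst hz
      obtain ⟨m', hm', rfl⟩ := ih x.tail rfl
      exact ⟨m', FP.tail _ _ hm', rfl⟩
    | cons' z m _ ih =>
      subst hz
      obtain ⟨m', hm', rfl⟩ := ih x.tail rfl
      exact ⟨_, FP.cons _ _ hm', map_mul f _ _⟩
  · rintro ⟨m, hm, rfl⟩
    induction hm with
    | head' x => exact FP.head _
    | tail' x m _ ih => exact FP.tail _ _ ih
    | cons' x m _ ih => rw [map_mul]; exact FP.cons _ _ ih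

theorem image_head_mul_FP_tail (f : F) (x : Stream' M) :
    f '' ((x.head * ·) '' FP x.tail) = ((x.map f).head * ·) '' FP (x.map f).tail := by
  rw [image_image, Stream'.tail_map, FP_map, image_image]
  simp only [map_mul, Stream'.head_map]

theorem exists_map_eq_of_FP_subset_range {α : Type*} {f : α → N} {x : Stream' N}
    (h : FP x ⊆ range f) : ∃ y : Stream' α, y.map f = x := by
  choose y hy using fun n => h (FP.singleton x n)
  exact ⟨y, funext hy⟩

theorem FP_subset_insert_union (x : Stream' M) :
    FP x ⊆ insert x.head ((x.head * ·) '' FP x.tail ∪ FP x.tail) := by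
  rintro m (_ | ⟨_, _, hm⟩ | ⟨_, m, hm⟩)
  · exact mem_insert _ _
  · exact Or.inr (Or.inr hm)
  · exact Or.inr (Or.inl ⟨m, hm, rfl⟩)

end Semigroup

theorem exists_finset_prod_of_mem_FP {M : Type*} [CommMonoid M] {x : Stream' M} {m : M}
    (hm : m ∈ FP x) : ∃ s : Finset ℕ, s.Nonempty ∧ m = ∏ i ∈ s, x.get i := by
  have shift (y : Stream' M) (s : Finset ℕ) :
      ∏ i ∈ s, y.tail.get i = ∏ i ∈ s.map (addRightEmbedding 1), y.get i := by
    rw [Finset.prod_map]; rfl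
  induction hm with
  | head' y => exact ⟨{0}, Finset.singleton_nonempty 0, by simp [Stream'.head]⟩
  | tail' y m _ ih =>
    obtain ⟨s, hs, rfl⟩ := ih
    exact ⟨_, hs.map, shift y s⟩
  | cons' y m _ ih =>
    obtain ⟨s, hs, rfl⟩ := ih
    refine ⟨insert 0 (s.map (addRightEmbedding 1)), Finset.insert_nonempty _ _, ?_⟩
    rw [Finset.prod_insert (by simp), shift]

theorem exists_finset_prod_of_mem_FP_tail {M : Type*} [CommMonoid M] {x : Stream' M} {m : M}
    (hm : m ∈ FP x.tail) : ∃ s : Finset ℕ, s.Nonempty ∧ 0 ∉ s ∧ m = ∏ i ∈ s, x.get i := by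
  obtain ⟨s, hs, rfl⟩ := exists_finset_prod_of_mem_FP hm
  refine ⟨s.map (addRightEmbedding 1), hs.map, by simp, ?_⟩
  rw [Finset.prod_map]
  rfl

end Hindman

section Transfer

variable {M N F : Type*} [Semigroup M] [Semigroup N] [FunLike F M N] [MulHomClass F M N]
  {p : Ultrafilter M}

theorem StronglyProductive.map (f : F) (hp : StronglyProductive p) :
    StronglyProductive (p.map f) := by
  intro A hA
  obtain ⟨x, hxA, hx⟩ := hp _ (Ultrafilter.mem_map.1 hA)
  refine ⟨x.map f, ?_, ?_⟩
  · rw [FP_map]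
    exact image_subset_iff.2 hxA
  · rw [FP_map]
    exact Filter.image_mem_map hx

theorem RegularSP.of_map (f : F) (h : RegularSP (p.map f)) : RegularSP p := by
  obtain ⟨B, hB, hreg⟩ := h
  refine ⟨f ⁻¹' B, hB, fun x hx hD => hreg (x.map f) ?_ ?_⟩
  · rw [FP_map]
    exact image_subset_iff.2 hx
  · rw [← image_head_mul_FP_tail]
    exact Filter.image_mem_map hD

theorem StronglyProductive.of_map_of_injective {f : F} (hf : Injective f)
    (h : StronglyProductive (p.map f)) : StronglyProductive p := by
  intro A hA
  obtain ⟨x, hxA, hx⟩ := h (f '' A) (by rwa [Ultrafilter.mem_map, preimage_image_eq _ hf])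
  obtain ⟨y, rfl⟩ := exists_map_eq_of_FP_subset_range (hxA.trans (image_subset_range _ _))
  rw [FP_map] at hxA hx
  refine ⟨y, (image_subset_image_iff hf).1 hxA, ?_⟩
  rwa [Ultrafilter.mem_map, preimage_image_eq _ hf] at hx

theorem RegularSP.map_of_injective {f : F} (hf : Injective f) (h : RegularSP p) :
    RegularSP (p.map f) := by
  obtain ⟨B, hB, hreg⟩ := h
  refine ⟨f '' B, Filter.image_mem_map hB, fun x hx hD => ?_⟩
  obtain ⟨y, rfl⟩ := exists_map_eq_of_FP_subset_range (hx.trans (image_subset_range _ _))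
  rw [FP_map] at hx
  refine hreg y ((image_subset_image_iff hf).1 hx) ?_
  rwa [← image_head_mul_FP_tail, Ultrafilter.mem_map, preimage_image_eq _ hf] at hD

end Transfer

section Idempotent

variable {S : Type*} [Semigroup S] {p : Ultrafilter S}

theorem StronglyProductive.mul_self_eq_of_pure {a : S}
    (hp : StronglyProductive (pure a : Ultrafilter S)) : a * a = a := by
  obtain ⟨x, hx, -⟩ := hp {a} rfl
  have h₀ : x.head = a := hx (FP.head x)
  have h₁ : x.tail.head = a := hx (FP.tail x _ (FP.head x.tail))
  have h₀₁ : x.head * x.tail.head = a := hx (FP.cons x _ (FP.head x.tail))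
  rwa [h₀, h₁] at h₀₁

theorem FP_drop_mem_of_regular (hnp : ∀ a, p ≠ pure a) {B : Set S}
    (hB : ∀ x : Stream' S, FP x ⊆ B → (x.head * ·) '' FP x.tail ∉ p) {x : Stream' S}
    (hxB : FP x ⊆ B) (hx : FP x ∈ p) (k : ℕ) : FP (x.drop k) ∈ p := by
  induction k with
  | zero => exact hx
  | succ k ih =>
    have hcover := Filter.mem_of_superset ih (FP_subset_insert_union (x.drop k))
    rw [Ultrafilter.mem_coe, insert_eq, Ultrafilter.union_mem_iff, Ultrafilter.union_mem_iff,
      Ultrafilter.singleton_mem_iff] at hcover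
    rcases hcover with hpure | hD | hT
    · exact (hnp _ hpure).elim
    · exact (hB _ ((FP_drop_subset_FP x k).trans hxB) hD).elim
    · rwa [Stream'.tail_drop'] at hT

theorem StronglyProductive.mul_self_eq (hp : StronglyProductive p)
    (hreg : (∀ a, p ≠ pure a) → RegularSP p) : p * p = p := by
  refine Ultrafilter.eq_of_le fun A hA => ?_
  by_cases hnp : ∀ a, p ≠ pure a
  · obtain ⟨B, hB, hBreg⟩ := hreg hnp
    obtain ⟨x, hxAB, hx⟩ := hp _ (Filter.inter_mem hA hB)
    refine (Ultrafilter.eventually_mul p p (· ∈ A)).2 (Filter.mem_of_superset hx fun g hg => ?_)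
    obtain ⟨k, hk⟩ := FP.mul hg
    exact Filter.mem_of_superset
      (FP_drop_mem_of_regular hnp hBreg (hxAB.trans inter_subset_right) hx k)
      fun y hy => (hxAB (hk y hy)).1
  · push Not at hnp
    obtain ⟨a, rfl⟩ := hnp
    show a * a ∈ A
    rwa [hp.mul_self_eq_of_pure]

end Idempotent

def IsSPRegular (G : Type*) [Group G] : Prop :=
  ∀ p : Ultrafilter G, StronglyProductive p → (∀ a, p ≠ pure a) → RegularSP p

section CommGroup

variable {G : Type*} [CommGroup G]

local notation "T" => CommGroup.primaryComponent G 2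

theorem mem_primaryComponent_two_of_sq_mem {g : G} (h : g ^ 2 ∈ T) : g ∈ T := by
  obtain ⟨k, hk⟩ := CommGroup.mem_primaryComponent.1 h
  exact CommGroup.mem_primaryComponent.2 ⟨k + 1, by rwa [pow_succ', pow_mul]⟩

theorem injective_sq_quotient_primaryComponent_two : Injective fun x : G ⧸ T => x ^ 2 := by
  intro x y hxy
  obtain ⟨g, hg⟩ := QuotientGroup.mk_surjective (x / y)
  have hg2 : ((g ^ 2 : G) : G ⧸ T) = 1 := by
    simp only at hxy
    rw [QuotientGroup.mk_pow, hg, div_pow, hxy, div_self']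
  rw [QuotientGroup.eq_one_iff] at hg2
  rw [← div_eq_one, ← hg, QuotientGroup.eq_one_iff]
  exact mem_primaryComponent_two_of_sq_mem hg2

theorem even_log_orderOf_sq_iff {g : G} (hg : g ∈ T) (hg1 : g ≠ 1) :
    Even (Nat.log 2 (orderOf (g ^ 2))) ↔ ¬Even (Nat.log 2 (orderOf g)) := by
  obtain ⟨n, hn⟩ := CommGroup.mem_primaryComponent_iff_orderOf.1 hg
  obtain ⟨m, rfl⟩ : ∃ m, n = m + 1 :=
    Nat.exists_eq_succ_of_ne_zero fun h => hg1 (orderOf_eq_one_iff.1 (by simpa [h] using hn))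
  have hsq : orderOf (g ^ 2) = 2 ^ m := by
    rw [orderOf_pow' g two_ne_zero, hn, Nat.gcd_eq_right (dvd_pow_self 2 m.succ_ne_zero),
      pow_succ, Nat.mul_div_cancel _ two_pos]
  rw [hsq, hn, Nat.log_pow one_lt_two, Nat.log_pow one_lt_two, Nat.even_add_one, not_not]

theorem exists_mem_forall_sq_mem_imp_eq_one (p : Ultrafilter G) :
    ∃ B ∈ p, ∀ b ∈ B, b ^ 2 ∈ B → b = 1 := by
  by_cases hT : (T : Set G) ∈ p
  · rcases p.mem_or_compl_mem {g : G | Even (Nat.log 2 (orderOf g))} with hE | hO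
    · refine ⟨_, Filter.inter_mem hT hE, fun b hb hb2 => by_contra fun hb1 => ?_⟩
      exact (even_log_orderOf_sq_iff hb.1 hb1).1 hb2.2 hb.2
    · refine ⟨_, Filter.inter_mem hT hO, fun b hb hb2 => by_contra fun hb1 => ?_⟩
      exact hb2.2 ((even_log_orderOf_sq_iff hb.1 hb1).2 hb.2)
  · obtain ⟨B, hB, hBsq⟩ := Ultrafilter.exists_mem_forall_apply_mem_imp_eq
      injective_sq_quotient_primaryComponent_two (p.map (QuotientGroup.mk' T))
    refine ⟨_, Filter.inter_mem (Ultrafilter.compl_mem_iff_notMem.2 hT) hB,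
      fun b hb hb2 => (hb.1 ?_).elim⟩
    have h := hBsq _ hb.2 hb2.2
    rw [pow_two, mul_eq_left] at h
    exact (QuotientGroup.eq_one_iff b).1 h

theorem exists_disjoint_prod_mul_sq_eq (x : Stream' G) {U U' U'' : Finset ℕ} (h0 : 0 ∉ U)
    (h0' : 0 ∉ U') (h0'' : 0 ∉ U'')
    (h : x.get 0 * (∏ i ∈ U, x.get i) * ∏ i ∈ U', x.get i = ∏ i ∈ U'', x.get i) :
    ∃ K D R : Finset ℕ, 0 ∈ K ∧ Disjoint K D ∧ Disjoint K R ∧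
      (∏ i ∈ K, x.get i) * (∏ i ∈ D, x.get i) ^ 2 = ∏ i ∈ R, x.get i := by
  classical
  -- `K`, `D`, `R` are the indices of exponent `1`, `2`, `-1` in `x₀ * ∏ U * ∏ U' * (∏ U'')⁻¹`.
  set A := insert 0 (U ∪ U')
  set K := A \ (U ∩ U' ∪ U'') ∪ U ∩ U' ∩ U''
  set D := (U ∩ U') \ U''
  set R := U'' \ A
  refine ⟨K, D, R, by simp [K, A, h0, h0''], ?_, ?_, ?_⟩
  · simp only [K, D, A, Finset.disjoint_left, Finset.mem_insert, Finset.mem_union,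
      Finset.mem_sdiff, Finset.mem_inter]
    tauto
  · simp only [K, R, A, Finset.disjoint_left, Finset.mem_insert, Finset.mem_union,
      Finset.mem_sdiff, Finset.mem_inter]
    tauto
  have hcount : {0} + U.1 + U'.1 + R.1 = K.1 + D.1 + D.1 + U''.1 := by
    rw [Multiset.ext]
    intro i
    simp only [Multiset.count_add, Multiset.count_singleton,
      Multiset.count_eq_of_nodup (Finset.nodup _), Finset.mem_val]
    by_cases hi0 : i = 0 <;> by_cases hU : i ∈ U <;> by_cases hU' : i ∈ U' <;>
      by_cases hU'' : i ∈ U'' <;> simp [*, K, D, R, A]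
  have hprod := congrArg (fun s : Multiset ℕ => (s.map x.get).prod) hcount
  simp only [Multiset.map_add, Multiset.prod_add, Multiset.map_singleton,
    Multiset.prod_singleton, ← Finset.prod_eq_multiset_prod] at hprod
  rw [h] at hprod
  rw [pow_two, ← mul_assoc]
  exact mul_left_cancel ((mul_comm _ _).trans hprod.symm)

theorem false_of_prod_mul_sq_eq {B : Set G} (hB1 : 1 ∉ B) (hsq : ∀ b ∈ B, b ^ 2 ∈ B → b = 1)
    (hinv : ∀ b ∈ B, b⁻¹ ∈ B → b⁻¹ = b) {x : Stream' G} (hx : FP x ⊆ B) {K D R : Finset ℕ}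
    (hK : K.Nonempty) (hKD : Disjoint K D) (hKR : Disjoint K R)
    (h : (∏ i ∈ K, x.get i) * (∏ i ∈ D, x.get i) ^ 2 = ∏ i ∈ R, x.get i) : False := by
  have hmem (s : Finset ℕ) (hs : s.Nonempty) : ∏ i ∈ s, x.get i ∈ B :=
    hx (FP.finsetProd x s hs)
  have hKD_mem := hmem _ (hK.mono (Finset.subset_union_left (s₂ := D)))
  rw [Finset.prod_union hKD] at hKD_mem
  rcases R.eq_empty_or_nonempty with rfl | hR
  · rcases D.eq_empty_or_nonempty with rfl | hD
    · simp only [Finset.prod_empty, one_pow, mul_one] at h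
      exact hB1 (h ▸ hmem K hK)
    · -- `∏ D` and `∏ (K ∪ D)` are mutually inverse, so they coincide and `∏ K = 1`.
      have hinvD : (∏ i ∈ D, x.get i)⁻¹ = (∏ i ∈ K, x.get i) * ∏ i ∈ D, x.get i := by
        rw [inv_eq_iff_mul_eq_one, mul_left_comm, ← pow_two, h, Finset.prod_empty]
      have hK1 := hinv _ (hmem D hD) (hinvD ▸ hKD_mem)
      rw [hinvD, mul_eq_right] at hK1
      exact hB1 (hK1 ▸ hmem K hK)
  · -- `∏ (K ∪ D)` and its square `∏ (K ∪ R)` both lie in `B`.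
    have hsq_mem : ((∏ i ∈ K, x.get i) * ∏ i ∈ D, x.get i) ^ 2 ∈ B := by
      have := hmem _ (hK.mono (Finset.subset_union_left (s₂ := R)))
      rw [Finset.prod_union hKR] at this
      rwa [mul_pow, pow_two (∏ i ∈ K, x.get i), mul_assoc, h]
    exact hB1 (hsq _ hKD_mem hsq_mem ▸ hKD_mem)

theorem head_mul_mul_ne_of_FP_subset {B : Set G} (hB1 : 1 ∉ B) (hsq : ∀ b ∈ B, b ^ 2 ∈ B → b = 1)
    (hinv : ∀ b ∈ B, b⁻¹ ∈ B → b⁻¹ = b) {x : Stream' G} (hx : FP x ⊆ B) {c₀ c₁ c₂ : G}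
    (hc₀ : c₀ ∈ FP x.tail) (hc₁ : c₁ ∈ FP x.tail) (hc₂ : c₂ ∈ FP x.tail) :
    x.head * c₀ * c₁ ≠ c₂ := by
  intro h
  obtain ⟨U, -, h0, rfl⟩ := exists_finset_prod_of_mem_FP_tail hc₀
  obtain ⟨U', -, h0', rfl⟩ := exists_finset_prod_of_mem_FP_tail hc₁
  obtain ⟨U'', -, h0'', rfl⟩ := exists_finset_prod_of_mem_FP_tail hc₂
  obtain ⟨K, D, R, hK, hKD, hKR, hKDR⟩ := exists_disjoint_prod_mul_sq_eq x h0 h0' h0'' h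
  exact false_of_prod_mul_sq_eq hB1 hsq hinv hx ⟨0, hK⟩ hKD hKR hKDR

theorem isSPRegular_of_comm : IsSPRegular G := by
  intro p hp hnp
  obtain ⟨B₁, hB₁, hsq⟩ := exists_mem_forall_sq_mem_imp_eq_one p
  obtain ⟨B₂, hB₂, hinv⟩ := Ultrafilter.exists_mem_forall_apply_mem_imp_eq inv_injective p
  have h1 : ({1}ᶜ : Set G) ∈ p :=
    Ultrafilter.compl_mem_iff_notMem.2 fun h => hnp 1 (Ultrafilter.singleton_mem_iff.1 h)
  refine ⟨B₁ ∩ B₂ ∩ {1}ᶜ, Filter.inter_mem (Filter.inter_mem hB₁ hB₂) h1, fun x hx hD => ?_⟩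
  obtain ⟨z, hz, -⟩ := hp _ hD
  obtain ⟨c₀, hc₀, e₀ : x.head * c₀ = z.head⟩ := hz (FP.head z)
  obtain ⟨c₁, hc₁, e₁ : x.head * c₁ = z.tail.head⟩ := hz (FP.tail z _ (FP.head z.tail))
  obtain ⟨c₂, hc₂, e₂ : x.head * c₂ = z.head * z.tail.head⟩ :=
    hz (FP.cons z _ (FP.head z.tail))
  refine head_mul_mul_ne_of_FP_subset (fun h => h.2 rfl)
    (fun b hb hb2 => hsq b hb.1.1 hb2.1.1) (fun b hb hb' => hinv b hb.1.2 hb'.1.2) hx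
    hc₀ hc₁ hc₂ (mul_left_cancel (a := x.head) ?_)
  calc x.head * (x.head * c₀ * c₁) = x.head * c₀ * (x.head * c₁) := by ac_rfl
    _ = z.head * z.tail.head := by rw [e₀, e₁]
    _ = x.head * c₂ := e₂.symm

end CommGroup

section Solvable

variable {G : Type*} [Group G]

theorem StronglyProductive.eq_one_of_pure {a : G}
    (hp : StronglyProductive (pure a : Ultrafilter G)) : a = 1 :=
  mul_eq_left.1 hp.mul_self_eq_of_pure

theorem Ultrafilter.exists_map_subtype_eq {H : Subgroup G} {p : Ultrafilter G}
    (hH : (H : Set G) ∈ p) : ∃ p' : Ultrafilter H, p'.map H.subtype = p :=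
  ⟨p.comap Subtype.val_injective (by simpa using hH),
    coe_injective (Filter.map_comap_of_mem (by simpa using hH))⟩

theorem isSPRegular_of_normal (N : Subgroup G) [N.Normal]
    (hN : IsSPRegular N) (hQ : IsSPRegular (G ⧸ N)) : IsSPRegular G := by
  intro p hp hnp
  by_cases hq : ∀ c, p.map (QuotientGroup.mk' N) ≠ pure c
  · exact (hQ _ (hp.map _) hq).of_map _
  push Not at hq
  obtain ⟨c, hc⟩ := hq
  have hc1 : c = 1 := (hc ▸ hp.map (QuotientGroup.mk' N)).eq_one_of_pure
  have hNp : (N : Set G) ∈ p := by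
    have h1 : ({1} : Set (G ⧸ N)) ∈ p.map (QuotientGroup.mk' N) := by rw [hc, hc1]; rfl
    convert Ultrafilter.mem_map.1 h1
    ext g
    simp [QuotientGroup.eq_one_iff]
  obtain ⟨p', rfl⟩ := Ultrafilter.exists_map_subtype_eq hNp
  refine (hN p' (hp.of_map_of_injective N.subtype_injective) fun a ha => hnp a ?_).map_of_injective
    N.subtype_injective
  rw [ha, Ultrafilter.map_pure]
  rfl

theorem isSPRegular_of_derivedSeries_eq_bot {n : ℕ} (h : derivedSeries G n = ⊥) :
    IsSPRegular G := by
  induction n generalizing G with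
  | zero =>
    refine fun p _ hnp => (hnp 1 (Ultrafilter.singleton_mem_iff.1 ?_)).elim
    refine Filter.mem_of_superset Filter.univ_mem fun g _ => Subgroup.mem_bot.1 ?_
    rw [← h, derivedSeries_zero]
    exact Subgroup.mem_top g
  | succ n ih =>
    have : IsMulCommutative (derivedSeries G n) := Subgroup.commutator_self_eq_bot_iff.1 h
    open scoped IsMulCommutative in
    refine isSPRegular_of_normal (derivedSeries G n) isSPRegular_of_comm (ih ?_)
    rw [← map_derivedSeries_eq (QuotientGroup.mk'_surjective _), QuotientGroup.map_mk'_self]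

end Solvable

/-- Every nonprincipal strongly productive ultrafilter on a solvable group is regular, and
consequently every strongly productive ultrafilter on a solvable group is idempotent. -/
theorem solvable_stronglyProductive_regular_and_idempotent
    {G : Type*} [Group G] (hG : IsSolvable G) :
    (∀ p : Ultrafilter G, StronglyProductive p → (∀ a : G, p ≠ pure a) → RegularSP p) ∧
    (∀ p : Ultrafilter G, StronglyProductive p → p * p = p) := by
  obtain ⟨n, hn⟩ := hG.solvable
  have hreg : IsSPRegular G := isSPRegular_of_derivedSeries_eq_bot hn
  exact ⟨hreg, fun p hp => hp.mul_self_eq (hreg p hp)⟩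
end

section
/- Let S be a semigroup and let p be a regular strongly productive ultrafilter on S. Then p is idempotent, i.e. p·p = p. -/
/- Semigroup structure on ultrafilters: `A ∈ p * q ↔ {x | {y | x * y ∈ A} ∈ q} ∈ p`. -/
attribute [local instance] Ultrafilter.semigroup

/-!
Every `A ∈ p` contains some `FP x ∈ p` with `FP x ⊆ B`, for the set `B` witnessing regularity.
Since `FP x ⊆ {x₀} ∪ FP₁ x ∪ x₀ · FP₁ x` and neither `{x₀}` (as `p` is nonprincipal) nor
`x₀ · FP₁ x` (by regularity) lies in `p`, we get `FP₁ x ∈ p`, and inductively every tail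
`FPₙ x ∈ p`. Each `m ∈ FP x` satisfies `m · FPₙ x ⊆ FP x` for some `n`, so `FP x ∈ p · p`
and hence `A ∈ p · p`. Thus `p · p ≤ p`, which forces equality of ultrafilters.
-/

namespace Hindman

variable {M : Type*} [Semigroup M]

theorem FP_subset_insert_head_union (a : Stream' M) :
    FP a ⊆ insert a.head (FP a.tail ∪ (a.head * ·) '' FP a.tail) := by
  intro m hm
  cases hm with
  | head' => exact Or.inl rfl
  | tail' _ _ h => exact Or.inr (Or.inl h)
  | cons' _ m h => exact Or.inr (Or.inr ⟨m, h, rfl⟩)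

theorem FP_mem_mul_of_forall_drop_mem {U V : Ultrafilter M} {a : Stream' M} (hU : FP a ∈ U)
    (hV : ∀ n, FP (a.drop n) ∈ V) : FP a ∈ U * V := by
  refine (Ultrafilter.eventually_mul U V (· ∈ FP a)).mpr (Filter.mem_of_superset hU ?_)
  intro m hm
  obtain ⟨n, hn⟩ := FP.mul hm
  exact Filter.mem_of_superset (hV n) hn

variable {U : Ultrafilter M} {B : Set M}

theorem FP_tail_mem_of_FP_mem (hU : ∀ m, U ≠ pure m)
    (hB : ∀ a : Stream' M, FP a ⊆ B → (a.head * ·) '' FP a.tail ∉ U)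
    {a : Stream' M} (haB : FP a ⊆ B) (ha : FP a ∈ U) : FP a.tail ∈ U := by
  have hcover : insert a.head (FP a.tail ∪ (a.head * ·) '' FP a.tail) ∈ U :=
    U.mem_of_superset ha (FP_subset_insert_head_union a)
  rw [Set.insert_eq, Ultrafilter.union_mem_iff, Ultrafilter.union_mem_iff] at hcover
  rcases hcover with hhead | htail | himage
  · exact absurd (Ultrafilter.eq_of_le (Filter.le_pure_iff.mpr hhead)) (hU a.head)
  · exact htail
  · exact absurd himage (hB a haB)

theorem FP_drop_mem_of_FP_mem (hU : ∀ m, U ≠ pure m)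
    (hB : ∀ a : Stream' M, FP a ⊆ B → (a.head * ·) '' FP a.tail ∉ U)
    {a : Stream' M} (haB : FP a ⊆ B) (ha : FP a ∈ U) (n : ℕ) : FP (a.drop n) ∈ U := by
  induction n with
  | zero => exact ha
  | succ n ih =>
    rw [← Stream'.tail_drop']
    exact FP_tail_mem_of_FP_mem hU hB ((FP_drop_subset_FP a n).trans haB) ih

end Hindman

/-- A regular (nonprincipal) strongly productive ultrafilter on a semigroup is idempotent. -/
theorem regular_stronglyProductive_isIdempotent
    {S : Type*} [Semigroup S] (p : Ultrafilter S)
    (hsp : StronglyProductive p) (hnp : ∀ a : S, p ≠ pure a) (hreg : RegularSP p) :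
    p * p = p := by
  obtain ⟨B, hB, hBreg⟩ := hreg
  refine Ultrafilter.eq_of_le fun A hA => ?_
  obtain ⟨x, hxAB, hxp⟩ := hsp (A ∩ B) (Filter.inter_mem hA hB)
  have hxB : Hindman.FP x ⊆ B := fun m hm => (hxAB hm).2
  have hxpp : Hindman.FP x ∈ p * p :=
    Hindman.FP_mem_mul_of_forall_drop_mem hxp (Hindman.FP_drop_mem_of_FP_mem hnp hBreg hxB hxp)
  exact (p * p).mem_of_superset hxpp fun m hm => (hxAB hm).1
end

section
/- Let S be an IP-regular semigroup with only finitely many idempotent elements. Then every nonprincipal strongly productive ultrafilter on S is regular. -/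
/-- A subset `A` of a semigroup `S` is *strongly IP-regular* if for every sequence `x` in `S`
with `FP x ⊆ A` there is no sequence `y` in `S` with `FP y ⊆ x₀ · FP₁ x`. -/
def StronglyIPRegular {S : Type*} [Semigroup S] (A : Set S) : Prop :=
  ∀ x : Stream' S, Hindman.FP x ⊆ A →
    ∀ y : Stream' S, ¬ Hindman.FP y ⊆ (x.head * ·) '' Hindman.FP x.tail

/-- A semigroup `S` is *IP-regular* if `S \ E(S)`, the complement of the set of idempotent
elements, is the union of finitely many strongly IP-regular subsets. -/
def IPRegular (S : Type*) [Semigroup S] : Prop :=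
  ∃ (n : ℕ) (f : Fin n → Set S), (∀ i, StronglyIPRegular (f i)) ∧
    {s : S | s * s = s}ᶜ = ⋃ i, f i

/-- If `S` is an IP-regular semigroup with only finitely many idempotent elements, then every
nonprincipal strongly productive ultrafilter on `S` is regular. -/
theorem ipRegular_stronglyProductive_regular
    {S : Type*} [Semigroup S] (hreg : IPRegular S) (hfin : {s : S | s * s = s}.Finite)
    (p : Ultrafilter S) (hsp : StronglyProductive p) (hnp : ∀ a : S, p ≠ pure a) :
    RegularSP p := by
  obtain ⟨n, f, hf, hE⟩ := hreg
  have hcomp : {s : S | s * s = s}ᶜ ∈ p := by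
    by_contra h
    rw [Ultrafilter.compl_mem_iff_notMem, not_not] at h
    obtain ⟨a, -, ha⟩ := Ultrafilter.eq_pure_of_finite_mem hfin h
    exact hnp a ha
  rw [hE, ← Set.biUnion_univ] at hcomp
  obtain ⟨i, -, hip⟩ := (Ultrafilter.finite_biUnion_mem_iff Set.finite_univ).mp hcomp
  refine ⟨f i, hip, fun x hx hmem => ?_⟩
  obtain ⟨y, hy, -⟩ := hsp _ hmem
  exact hf i x hx y hy
end

section
/- Let κ be an ordinal and let G = ⨁_{α<κ} ℝ/ℤ be the direct sum of κ copies of the circle group ℝ/ℤ (finitely supported functions from κ to ℝ/ℤ). Let B be the set of elements of G of order exactly 2, i.e. B = {x ∈ G : x ≠ 0 and x + x = 0}. Then B is strongly IP-regular. -/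
/-- A subset `A` of an additive semigroup `S` is *strongly IP-regular* if for every sequence `x`
in `S` with `FS x ⊆ A` (where `Hindman.FS x` is the set of sums `∑_{i ∈ a} x i` over finite
nonempty `a ⊆ ℕ`) there is no sequence `y` in `S` with `FS y ⊆ x₀ + FS₁ x`. -/
def StronglyIPRegularAdd {S : Type*} [AddSemigroup S] (A : Set S) : Prop :=
  ∀ x : Stream' S, Hindman.FS x ⊆ A →
    ∀ y : Stream' S, ¬ Hindman.FS y ⊆ (x.head + ·) '' Hindman.FS x.tail

/-!
Everything happens in the Boolean part of the group. If `FS x` consists of nonzero elements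
with `m + m = 0`, then sums over finite sets of the `x (i + 1)` add by symmetric difference, so
`{0} ∪ FS₁ x` is closed under addition. Given `y` with `FS y ⊆ x₀ + FS₁ x`, write
`y₀ = x₀ + s`, `y₁ = x₀ + t`, `y₀ + y₁ = x₀ + u`; then `x₀ = s + t + u` lies in `{0} ∪ FS₁ x`.
But `x₀ ≠ 0`, and `x₀ ∈ FS₁ x` would put `x₀ + x₀ = 0` into `FS x`.
-/

open Finset
open scoped symmDiff

theorem Finset.sum_symmDiff_of_add_self_eq_zero {ι M : Type*} [AddCommMonoid M] [DecidableEq ι]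
    {f : ι → M} (hf : ∀ i, f i + f i = 0) (s t : Finset ι) :
    ∑ i ∈ s ∆ t, f i = ∑ i ∈ s, f i + ∑ i ∈ t, f i := by
  have hinter : ∑ i ∈ s ∩ t, f i + ∑ i ∈ s ∩ t, f i = 0 := by
    rw [← sum_add_distrib]
    exact sum_eq_zero fun i _ => hf i
  rw [← sum_union_inter, ← sum_sdiff (inter_subset_union (s := s) (t := t)), add_assoc, hinter,
    add_zero, symmDiff_eq_sup_sdiff_inf]
  rfl

namespace Hindman

variable {M : Type*} [AddCommMonoid M] {a : Stream' M} {m n : M}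

theorem FS.exists_finset_sum (h : m ∈ FS a) :
    ∃ s : Finset ℕ, s.Nonempty ∧ ∑ i ∈ s, a.get i = m := by
  induction h with
  | head' a => exact ⟨{0}, singleton_nonempty 0, by simp [Stream'.head]⟩
  | tail' a m _ ih =>
    obtain ⟨s, hs, rfl⟩ := ih
    refine ⟨s.map (addRightEmbedding 1), hs.map, ?_⟩
    rw [sum_map]
    rfl
  | cons' a m _ ih =>
    obtain ⟨s, hs, rfl⟩ := ih
    refine ⟨insert 0 (s.map (addRightEmbedding 1)), insert_nonempty _ _, ?_⟩
    rw [sum_insert (by simp), sum_map]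
    rfl

theorem mem_insert_zero_FS_iff : m ∈ insert 0 (FS a) ↔ ∃ s : Finset ℕ, ∑ i ∈ s, a.get i = m := by
  constructor
  · rintro (rfl | hm)
    · exact ⟨∅, sum_empty⟩
    · obtain ⟨s, -, hs⟩ := FS.exists_finset_sum hm
      exact ⟨s, hs⟩
  · rintro ⟨s, rfl⟩
    rcases s.eq_empty_or_nonempty with rfl | hs
    · exact Set.mem_insert _ _
    · exact Set.mem_insert_of_mem _ (FS.finsetSum a s hs)

theorem add_mem_insert_zero_FS (ha : ∀ i, a.get i + a.get i = 0) (hm : m ∈ insert 0 (FS a))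
    (hn : n ∈ insert 0 (FS a)) : m + n ∈ insert 0 (FS a) := by
  classical
  obtain ⟨s, rfl⟩ := mem_insert_zero_FS_iff.mp hm
  obtain ⟨t, rfl⟩ := mem_insert_zero_FS_iff.mp hn
  exact mem_insert_zero_FS_iff.mpr ⟨s ∆ t, sum_symmDiff_of_add_self_eq_zero ha s t⟩

end Hindman

open Hindman in
theorem stronglyIPRegularAdd_setOf_ne_zero_add_self_eq_zero {M : Type*} [AddCommMonoid M] :
    StronglyIPRegularAdd {m : M | m ≠ 0 ∧ m + m = 0} := by
  intro x hx y hy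
  have hB : ∀ m ∈ FS x, m ≠ 0 ∧ m + m = 0 := fun m hm => hx hm
  have hBtail : ∀ m ∈ FS x.tail, m ≠ 0 ∧ m + m = 0 := fun m hm => hB m (FS.tail x m hm)
  have htorsion : ∀ i, x.tail.get i + x.tail.get i = 0 :=
    fun i => (hBtail _ (FS.singleton x.tail i)).2
  obtain ⟨s, hs, hys⟩ := hy (FS.head y)
  obtain ⟨t, ht, hyt⟩ := hy (FS.tail y _ (FS.head y.tail))
  obtain ⟨u, hu, hyu⟩ := hy (FS.cons y _ (FS.head y.tail))
  beta_reduce at hys hyt hyu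
  have hx₀ : x.head = s + t + u :=
    calc x.head = (x.head + u) + u := by rw [add_assoc, (hBtail u hu).2, add_zero]
      _ = (x.head + s) + (x.head + t) + u := by rw [hyu, ← hys, ← hyt]
      _ = (x.head + x.head) + (s + t + u) := by abel
      _ = s + t + u := by rw [(hB _ (FS.head x)).2, zero_add]
  have hmem : x.head ∈ insert 0 (FS x.tail) := by
    rw [hx₀]
    refine add_mem_insert_zero_FS htorsion (add_mem_insert_zero_FS htorsion ?_ ?_) ?_ <;>
      exact Set.mem_insert_of_mem _ ‹_›
  rcases hmem with h0 | htail
  · exact (hB _ (FS.head x)).1 h0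
  · have hzero := FS.cons x _ htail
    rw [(hB _ (FS.head x)).2] at hzero
    exact (hB 0 hzero).1 rfl

theorem order_two_stronglyIPRegular_general {ι : Type*} :
    StronglyIPRegularAdd
      {x : ι →₀ AddCircle (1 : ℝ) | x ≠ 0 ∧ x + x = 0} :=
  stronglyIPRegularAdd_setOf_ne_zero_add_self_eq_zero

/-- In the direct sum `G = ⨁_{α < κ} ℝ/ℤ` (finitely supported functions from a well-ordered
index type into `ℝ/ℤ = AddCircle 1`), the set of elements of order exactly `2` is strongly
IP-regular. -/
theorem order_two_stronglyIPRegular {ι : Type*} [LinearOrder ι] [WellFoundedLT ι] :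
    StronglyIPRegularAdd
      {x : ι →₀ AddCircle (1 : ℝ) | x ≠ 0 ∧ x + x = 0} :=
  order_two_stronglyIPRegular_general
end

section
/- Let κ be an ordinal, let G = ⨁_{α<κ} ℝ/ℤ, and identify each element of ℝ/ℤ with its unique representative in [0,1). Let C = {x ∈ G : x has order greater than 2}, and for x ∈ C let μ(x) be the least α < κ such that the α-th coordinate π_α(x) ∉ {0, 1/2}. Let C₁ = {x ∈ C : π_{μ(x)}(x) = 1/4}. Then the restriction of μ to C₁ is a rank function on C₁: for every sequence x in G with FS(x) ⊆ C₁, (1) μ is finite-to-one on {x_n : n ∈ ℕ}, and (2) if μ(x_n) ≥ μ(x₀) for every n, then there is no sequence y in G with FS(y) ⊆ x₀ + FS₁(x). -/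
/-!
Below `μ z` every coordinate of `z` is `2`-torsion, so on finite sums whose summands have
`μ ≥ α` the `α`-th coordinate behaves like an element of `ℤ/4` (with `1/4 ↦ 1`). Such a sum
cannot lie in `C₁` with `α`-th coordinate `3/4`: that coordinate is neither `1/4` nor
`2`-torsion. Three summands with the same `μ = w` add up to `3/4` at `w`, which gives
finite-to-one-ness. For the second property let `α = μ x₀`: each `x n` with `n ≥ 1` has `α`-th
coordinate `0` or `1/4`, and since `x₀` contributes `1/4`, at most one summand of an element of
`FS₁ x` contributes `1/4`. So all of `x₀ + FS₁ x` has `α`-th coordinate in `{1/4, 1/2}`, and the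
values of `y₀, y₁, y₂` and of their sums cannot all lie there.
-/

/-- A *rank function* on a subset `A` of an additive semigroup `S` is a function `ρ` from `S` to
a (well-)ordered set `W` such that for every sequence `x` in `S` with `FS x ⊆ A`:
(1) the restriction of `ρ` to `{x n : n ∈ ℕ}` is finite-to-one, and
(2) if `ρ (x n) ≥ ρ (x 0)` for every `n`, then there is no sequence `y` in `S` with
`FS y ⊆ x₀ + FS₁ x`. -/
def IsRankFunction {S W : Type*} [AddSemigroup S] [LinearOrder W] (A : Set S) (ρ : S → W) :
    Prop :=
  ∀ x : Stream' S, Hindman.FS x ⊆ A →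
    (∀ w : W, {s | s ∈ Set.range x ∧ ρ s = w}.Finite) ∧
    ((∀ n : ℕ, ρ (x 0) ≤ ρ (x n)) →
      ∀ y : Stream' S, ¬ Hindman.FS y ⊆ (x.head + ·) '' Hindman.FS x.tail)

open Hindman

local notation "ε" => (ZMod.toAddCircle : ZMod 4 →+ UnitAddCircle)

theorem Hindman.FS_subset_of_add_mem {M : Type*} [AddSemigroup M] {a : Stream' M} {S P : Set M}
    (haS : FS a ⊆ S) (haP : ∀ n, a n ∈ P) (hP : ∀ u ∈ P, ∀ v ∈ P, u + v ∈ S → u + v ∈ P) :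
    FS a ⊆ P := by
  intro m hm
  induction hm with
  | head' a => exact haP 0
  | tail' a m _ ih => exact ih (fun _ h ↦ haS (FS.tail _ _ h)) (fun n ↦ haP (n + 1))
  | cons' a m hm ih =>
    exact hP _ (haP 0) _ (ih (fun _ h ↦ haS (FS.tail _ _ h)) (fun n ↦ haP (n + 1)))
      (haS (FS.cons _ _ hm))

theorem Hindman.FS.add_three {M : Type*} [AddCommMonoid M] (a : Stream' M) {i j k : ℕ}
    (hij : i < j) (hjk : j < k) : a i + a j + a k ∈ FS a := by
  have := FS.finsetSum a {i, j, k} (Finset.insert_nonempty _ _)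
  rwa [Finset.sum_insert (by simp [hij.ne, (hij.trans hjk).ne]), Finset.sum_pair hjk.ne,
    ← add_assoc] at this

theorem ZMod.toAddCircle_one_four : ε 1 = ((1 / 4 : ℝ) : UnitAddCircle) := by
  simpa using ZMod.toAddCircle_natCast (N := 4) 1

theorem ZMod.toAddCircle_two_four : ε 2 = ((1 / 2 : ℝ) : UnitAddCircle) := by
  have := ZMod.toAddCircle_natCast (N := 4) 2
  norm_num at this
  exact this

theorem not_FS_subset_preimage_toAddCircle_one_two {M : Type*} [AddCommMonoid M]
    (y : Stream' M) (f : M →+ UnitAddCircle) : ¬ FS y ⊆ f ⁻¹' (ε '' {1, 2}) := by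
  intro hy
  have mem : ∀ s ∈ FS y, ∀ k, f s = ε k → k ∈ ({1, 2} : Finset (ZMod 4)) := by
    intro s hs k hk
    simpa [hk, (ZMod.toAddCircle_injective 4).mem_set_image] using hy hs
  obtain ⟨a, -, ha⟩ := hy (FS.singleton y 0)
  obtain ⟨b, -, hb⟩ := hy (FS.singleton y 1)
  obtain ⟨c, -, hc⟩ := hy (FS.singleton y 2)
  have key : ∀ a b c : ZMod 4, a ∈ ({1, 2} : Finset _) → b ∈ ({1, 2} : Finset _) →
      c ∈ ({1, 2} : Finset _) → a + b ∈ ({1, 2} : Finset _) → b + c ∈ ({1, 2} : Finset _) →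
      a + b + c ∉ ({1, 2} : Finset _) := by decide
  refine key a b c (mem _ (FS.singleton y 0) a ha.symm) (mem _ (FS.singleton y 1) b hb.symm)
    (mem _ (FS.singleton y 2) c hc.symm)
    (mem _ (FS.add_two y 0 1 one_pos) _ ?_) (mem _ (FS.add_two y 1 2 one_lt_two) _ ?_)
    (mem _ (FS.add_three y one_pos one_lt_two) _ ?_) <;>
  simp only [Stream'.get, map_add, ha, hb, hc]

section LeadingCoordinate

variable {ι : Type*} [LinearOrder ι]

def twoTorsionBelow {A : Type*} [AddCommMonoid A] (α : ι) : AddSubmonoid (ι →₀ A) where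
  carrier := {z | ∀ β < α, z β + z β = 0}
  add_mem' {u v} hu hv β hβ := by
    simp only [Finsupp.add_apply, add_add_add_comm, hu β hβ, hv β hβ, add_zero]
  zero_mem' _ _ := by simp

def IsLeadingCoordinate (μ : (ι →₀ UnitAddCircle) → ι) : Prop :=
  ∀ x : ι →₀ UnitAddCircle, x + x ≠ 0 →
    IsLeast {α | x α ∉ ({0, ((1 / 2 : ℝ) : UnitAddCircle)} : Set UnitAddCircle)} (μ x)

def C₁ (μ : (ι →₀ UnitAddCircle) → ι) : Set (ι →₀ UnitAddCircle) :=
  {x | x + x ≠ 0 ∧ x (μ x) = ((1 / 4 : ℝ) : UnitAddCircle)}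

def quarterOrZeroAt (α : ι) : Set (ι →₀ UnitAddCircle) :=
  {t | t ∈ twoTorsionBelow α ∧ t α ∈ ε '' {0, 1}}

variable {μ : (ι →₀ UnitAddCircle) → ι}

theorem IsLeadingCoordinate.apply_eq_zero_or_half (hμ : IsLeadingCoordinate μ)
    {x : ι →₀ UnitAddCircle} (hx : x + x ≠ 0) {α : ι} (hα : α < μ x) :
    x α = ε 0 ∨ x α = ε 2 := by
  rw [map_zero, ZMod.toAddCircle_two_four]
  by_contra h
  exact hα.not_ge ((hμ x hx).2 (by simpa using h))

theorem IsLeadingCoordinate.mem_twoTorsionBelow (hμ : IsLeadingCoordinate μ)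
    {x : ι →₀ UnitAddCircle} (hx : x + x ≠ 0) {α : ι} (hα : α ≤ μ x) :
    x ∈ twoTorsionBelow α := by
  intro β hβ
  rcases hμ.apply_eq_zero_or_half hx (hβ.trans_le hα) with h | h <;>
  rw [h, ← map_add, ZMod.toAddCircle_eq_zero] <;> decide

theorem IsLeadingCoordinate.apply_ne_three_quarters (hμ : IsLeadingCoordinate μ)
    {z : ι →₀ UnitAddCircle} (hz : z ∈ C₁ μ) {α : ι} (hzα : z ∈ twoTorsionBelow α) : z α ≠ ε 3 := by
  obtain ⟨hz2, hzμ⟩ := hz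
  rw [← ZMod.toAddCircle_one_four] at hzμ
  rcases lt_trichotomy (μ z) α with h | rfl | h
  · have := hzα _ h
    rw [hzμ, ← map_add, ZMod.toAddCircle_eq_zero] at this
    exact absurd this (by decide)
  · rw [hzμ, Ne, ZMod.toAddCircle_inj]
    decide
  · rcases hμ.apply_eq_zero_or_half hz2 h with h | h <;>
    rw [h, Ne, ZMod.toAddCircle_inj] <;> decide

theorem IsLeadingCoordinate.mu_ne_of_lt_of_lt (hμ : IsLeadingCoordinate μ)
    {x : Stream' (ι →₀ UnitAddCircle)} (hx : FS x ⊆ C₁ μ) {i j k : ℕ} (hij : i < j)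
    (hjk : j < k) {w : ι} (hi : μ (x i) = w) (hj : μ (x j) = w) : μ (x k) ≠ w := by
  intro hk
  have hC (n : ℕ) : x n ∈ C₁ μ := hx (FS.singleton x n)
  have hw (n : ℕ) (hn : μ (x n) = w) : x n ∈ twoTorsionBelow w :=
    hμ.mem_twoTorsionBelow (hC n).1 hn.ge
  have hq (n : ℕ) (hn : μ (x n) = w) : x n w = ε 1 := by
    rw [ZMod.toAddCircle_one_four, ← hn]
    exact (hC n).2
  refine hμ.apply_ne_three_quarters (hx (FS.add_three x hij hjk))
    (add_mem (add_mem (hw i hi) (hw j hj)) (hw k hk)) ?_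
  simp only [Finsupp.add_apply, hq i hi, hq j hj, hq k hk, ← map_add]
  rfl

theorem IsLeadingCoordinate.finite_setOf_mu_eq (hμ : IsLeadingCoordinate μ)
    {x : Stream' (ι →₀ UnitAddCircle)} (hx : FS x ⊆ C₁ μ) (w : ι) :
    {n | μ (x n) = w}.Finite := by
  by_contra hinf
  obtain ⟨i, hi⟩ := Set.Infinite.nonempty hinf
  obtain ⟨j, hj, hij⟩ := Set.Infinite.exists_gt hinf i
  obtain ⟨k, hk, hjk⟩ := Set.Infinite.exists_gt hinf j
  exact hμ.mu_ne_of_lt_of_lt hx hij hjk hi hj hk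

theorem IsLeadingCoordinate.apply_mu_mem_zero_one (hμ : IsLeadingCoordinate μ)
    {x₀ t : ι →₀ UnitAddCircle} (h₀ : x₀ ∈ C₁ μ) (ht : t ∈ C₁ μ) (hle : μ x₀ ≤ μ t)
    (hsum : x₀ + t ∈ C₁ μ) : t (μ x₀) ∈ ε '' {0, 1} := by
  rcases hle.eq_or_lt with h | h
  · exact ⟨1, by simp, by rw [h, ZMod.toAddCircle_one_four, ht.2]⟩
  rcases hμ.apply_eq_zero_or_half ht.1 h with h0 | h2
  · exact ⟨0, by simp, h0.symm⟩
  refine absurd ?_ (hμ.apply_ne_three_quarters hsum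
    (add_mem (hμ.mem_twoTorsionBelow h₀.1 le_rfl) (hμ.mem_twoTorsionBelow ht.1 hle)))
  rw [Finsupp.add_apply, h₀.2, h2, ← ZMod.toAddCircle_one_four, ← map_add]
  rfl

theorem IsLeadingCoordinate.add_mem_of_add_mem_C₁ (hμ : IsLeadingCoordinate μ)
    {x₀ u v : ι →₀ UnitAddCircle} (h₀ : x₀ ∈ C₁ μ)
    (hu : u ∈ quarterOrZeroAt (μ x₀)) (hv : v ∈ quarterOrZeroAt (μ x₀))
    (hsum : x₀ + (u + v) ∈ C₁ μ) : u + v ∈ quarterOrZeroAt (μ x₀) := by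
  obtain ⟨hu2, k, hk, hku⟩ := hu
  obtain ⟨hv2, l, hl, hlv⟩ := hv
  have hsum2 := hμ.apply_ne_three_quarters hsum
    (add_mem (hμ.mem_twoTorsionBelow h₀.1 le_rfl) (add_mem hu2 hv2))
  rw [Finsupp.add_apply, Finsupp.add_apply, h₀.2, ← hku, ← hlv, ← ZMod.toAddCircle_one_four,
    ← map_add, ← map_add, Ne, ZMod.toAddCircle_inj] at hsum2
  refine ⟨add_mem hu2 hv2, k + l, ?_, by rw [map_add, hku, hlv, Finsupp.add_apply]⟩
  have key : ∀ k l : ZMod 4, k ∈ ({0, 1} : Finset _) → l ∈ ({0, 1} : Finset _) →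
      1 + (k + l) ≠ 3 → k + l ∈ ({0, 1} : Finset _) := by decide
  simpa using key k l (by simpa using hk) (by simpa using hl) hsum2

theorem IsLeadingCoordinate.image_add_FS_tail_subset (hμ : IsLeadingCoordinate μ)
    {x : Stream' (ι →₀ UnitAddCircle)} (hx : FS x ⊆ C₁ μ) (hge : ∀ n, μ (x 0) ≤ μ (x n)) :
    (x.head + ·) '' FS x.tail ⊆ Finsupp.applyAddHom (μ (x 0)) ⁻¹' (ε '' {1, 2}) := by
  have h₀ : x 0 ∈ C₁ μ := hx (FS.head x)
  have hgood : FS x.tail ⊆ quarterOrZeroAt (μ (x 0)) := by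
    refine FS_subset_of_add_mem (S := {t | x 0 + t ∈ C₁ μ})
      (fun t ht ↦ hx (FS.cons x t ht)) (fun n ↦ ⟨?_, ?_⟩)
      (fun u hu v hv huv ↦ hμ.add_mem_of_add_mem_C₁ h₀ hu hv huv)
    · exact hμ.mem_twoTorsionBelow (hx (FS.singleton x (n + 1))).1 (hge (n + 1))
    · exact hμ.apply_mu_mem_zero_one h₀ (hx (FS.singleton x (n + 1))) (hge (n + 1))
        (hx (FS.add_two x 0 (n + 1) n.succ_pos))
  rintro _ ⟨t, ht, rfl⟩
  obtain ⟨k, hk, hkt⟩ := (hgood ht).2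
  refine ⟨1 + k, ?_, ?_⟩
  · simp only [Set.mem_insert_iff, Set.mem_singleton_iff] at hk ⊢
    rcases hk with rfl | rfl <;> decide
  · rw [map_add, hkt, ZMod.toAddCircle_one_four]
    exact congrArg (· + t (μ (x 0))) h₀.2.symm

end LeadingCoordinate

theorem mu_isRankFunction_C1_general {ι : Type*} [LinearOrder ι]
    (μ : (ι →₀ AddCircle (1 : ℝ)) → ι)
    (hμ : ∀ x : ι →₀ AddCircle (1 : ℝ), x + x ≠ 0 →
      IsLeast {α : ι |
        x α ∉ ({0, ((1/2 : ℝ) : AddCircle (1 : ℝ))} : Set (AddCircle (1 : ℝ)))} (μ x)) :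
    IsRankFunction
      {x : ι →₀ AddCircle (1 : ℝ) | x + x ≠ 0 ∧ x (μ x) = ((1/4 : ℝ) : AddCircle (1 : ℝ))}
      μ := by
  have hμ' : IsLeadingCoordinate μ := hμ
  intro x hx
  refine ⟨fun w ↦ ((hμ'.finite_setOf_mu_eq hx w).image x).subset ?_, fun hge y hy ↦ ?_⟩
  · rintro _ ⟨⟨n, rfl⟩, hn⟩
    exact ⟨n, hn, rfl⟩
  · exact not_FS_subset_preimage_toAddCircle_one_two y _
      (hy.trans (hμ'.image_add_FS_tail_subset hx hge))

/-- Let `G = ⨁_{α<κ} ℝ/ℤ` (finitely supported maps from a well-ordered index type `ι` to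
`ℝ/ℤ = AddCircle 1`), let `C` be the set of elements of order greater than `2` (i.e.
`x + x ≠ 0`), and for `x ∈ C` let `μ x` be the least `α` such that the `α`-th coordinate of `x`
is not in `{0, 1/2}`.  Then `μ` is a rank function on
`C₁ = {x ∈ C : π_{μ x} (x) = 1/4}`. -/
theorem mu_isRankFunction_C1 {ι : Type*} [LinearOrder ι] [WellFoundedLT ι]
    (μ : (ι →₀ AddCircle (1 : ℝ)) → ι)
    (hμ : ∀ x : ι →₀ AddCircle (1 : ℝ), x + x ≠ 0 →
      IsLeast {α : ι |
        x α ∉ ({0, ((1/2 : ℝ) : AddCircle (1 : ℝ))} : Set (AddCircle (1 : ℝ)))} (μ x)) :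
    IsRankFunction
      {x : ι →₀ AddCircle (1 : ℝ) | x + x ≠ 0 ∧ x (μ x) = ((1/4 : ℝ) : AddCircle (1 : ℝ))}
      μ :=
  mu_isRankFunction_C1_general μ hμ
end

section
/- Let T be a commutative nilsemigroup, i.e. a commutative semigroup with a zero element 0 (satisfying 0·x = 0 for all x) such that every element of T is nilpotent (for every x ∈ T there is n ≥ 1 with xⁿ = 0). Then T \ {0} is strongly IP-regular, and consequently T is IP-regular. -/
/-- `spow a n = a ^ (n + 1)`: positive powers in a semigroup. -/
def spow {S : Type*} [Semigroup S] (a : S) : ℕ → S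
  | 0 => a
  | n + 1 => a * spow a n

private lemma key_aux {T : Type*} [CommSemigroup T] (x₀ : T) (B : Set T)
    (y : Stream' T) (hy : Hindman.FP y ⊆ (x₀ * ·) '' B) :
    ∀ n : ℕ, ∃ p ∈ Hindman.FP y, ∃ c : T, p = spow x₀ n * c := by
  intro n
  induction n with
  | zero =>
    obtain ⟨m, _, hm⟩ := hy (Hindman.FP.head y)
    exact ⟨y.head, Hindman.FP.head y, m, hm.symm⟩
  | succ n ih =>
    obtain ⟨p, hp, c, hc⟩ := ih
    obtain ⟨k, hk⟩ := Hindman.FP.mul hp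
    have hhead : (y.drop k).head ∈ Hindman.FP (y.drop k) := Hindman.FP.head _
    have h1 : p * (y.drop k).head ∈ Hindman.FP y := hk _ hhead
    obtain ⟨m, _, hm⟩ := hy (Hindman.FP_drop_subset_FP y k hhead)
    refine ⟨p * (y.drop k).head, h1, c * m, ?_⟩
    have hm' : x₀ * m = (y.drop k).head := hm
    rw [hc, ← hm', mul_mul_mul_comm, mul_comm (spow x₀ n) x₀]
    rfl

/-- If `T` is a commutative nilsemigroup with zero element `z` (every element has some positive
power equal to `z`), then `T \ {z}` is strongly IP-regular, and consequently `T` is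
IP-regular. -/
theorem nilsemigroup_stronglyIPRegular {T : Type*} [CommSemigroup T] (z : T)
    (hz : ∀ x : T, z * x = z) (hnil : ∀ x : T, ∃ n : ℕ, spow x n = z) :
    StronglyIPRegular ({z}ᶜ : Set T) ∧ IPRegular T := by
  have hstrong : StronglyIPRegular ({z}ᶜ : Set T) := by
    intro x hx y hy
    obtain ⟨N, hN⟩ := hnil x.head
    obtain ⟨p, hp, c, hc⟩ := key_aux x.head (Hindman.FP x.tail) y hy N
    have hpz : p = z := by rw [hc, hN, hz]
    obtain ⟨m, hm, hxm⟩ := hy hp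
    have hxm' : x.head * m = p := hxm
    have : x.head * m ∈ Hindman.FP x := Hindman.FP.cons x m hm
    exact hx this (by rw [Set.mem_singleton_iff, hxm', hpz])
  refine ⟨hstrong, 1, fun _ => ({z}ᶜ : Set T), fun _ => hstrong, ?_⟩
  have hidem : {s : T | s * s = s} = {z} := by
    ext s
    simp only [Set.mem_setOf_eq, Set.mem_singleton_iff]
    constructor
    · intro hs
      have hsn : ∀ n, spow s n = s := by
        intro n
        induction n with
        | zero => rfl
        | succ n ih => show s * spow s n = s; rw [ih, hs]
      obtain ⟨n, hn⟩ := hnil s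
      rw [← hn, hsn]
    · intro h; rw [h]; exact hz z
  rw [hidem, Set.iUnion_const]
end

section
/- For any nonempty type (alphabet) α, the free semigroup on α is IP-regular. -/
namespace IPRegAux

open Hindman

/-- The coloring cells: words whose length is `2^m * b` with `b` odd,
`m % 2 = e` and `b % 4 = r`. -/
def cell (α : Type*) (e r : ℕ) : Set (FreeSemigroup α) :=
  {w | ∃ m b : ℕ, w.length = 2 ^ m * b ∧ b % 2 = 1 ∧ m % 2 = e ∧ b % 4 = r}

lemma le_aux {a c e d : ℕ} (hd : d % 2 = 1) (h : 2 ^ a * e = 2 ^ c * d) : a ≤ c := by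
  by_contra hlt
  push_neg at hlt
  have hsplit : (2:ℕ) ^ a * e = 2 ^ c * (2 ^ (a - c) * e) := by
    rw [← mul_assoc, ← pow_add]
    congr 2
    omega
  rw [hsplit] at h
  have hde : d = 2 ^ (a - c) * e := (Nat.eq_of_mul_eq_mul_left (pow_pos two_pos c) h).symm
  have h2 : 2 ∣ 2 ^ (a - c) * e := Dvd.dvd.mul_right (dvd_pow_self 2 (by omega)) e
  generalize 2 ^ (a - c) * e = A at hde h2
  omega

lemma pow_mul_odd_inj {a c e d : ℕ} (he : e % 2 = 1) (hd : d % 2 = 1)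
    (h : 2 ^ a * e = 2 ^ c * d) : a = c :=
  le_antisymm (le_aux hd h) (le_aux he h.symm)

/-- Product of the first `n + 1` entries of a stream. -/
def pp {S : Type*} [Semigroup S] : ℕ → Stream' S → S
  | 0, z => z.head
  | n + 1, z => z.head * pp n z.tail

lemma pp_mem {S : Type*} [Semigroup S] : ∀ (n : ℕ) (z : Stream' S), pp n z ∈ FP z
  | 0, z => FP.head z
  | n + 1, z => FP.cons z _ (pp_mem n z.tail)

lemma pp_length {α : Type*} : ∀ (n : ℕ) (z : Stream' (FreeSemigroup α)),
    (pp n z).length = ∑ i ∈ Finset.range (n + 1), (z.get i).length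
  | 0, z => by
    simp only [pp, Finset.sum_range_one]
    rfl
  | n + 1, z => by
    rw [pp, FreeSemigroup.length_mul, pp_length n z.tail,
      Finset.sum_range_succ' (fun i => (z.get i).length) (n + 1)]
    simp only [Stream'.get_tail]
    rw [add_comm]

lemma strong_cell {α : Type*} (e r : ℕ) : StronglyIPRegular (cell α e r) := by
  intro x hA y hy
  obtain ⟨m, b, hx0, hb2, hme, hb4⟩ := hA (FP.head x)
  -- Key arithmetic fact: no element of `x.head * FP x.tail` has length divisible by `2^(m+1)`.
  have key : ∀ s ∈ FP x.tail, ¬ (2 ^ (m + 1) ∣ (x.head * s).length) := by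
    intro s hs hdvd
    obtain ⟨k, c, hslen, hc2, hke, hc4⟩ := hA (FP.tail x s hs)
    obtain ⟨j, d, hcons, hd2, hje, hd4⟩ := hA (FP.cons x s hs)
    rw [FreeSemigroup.length_mul, hx0, hslen] at hcons hdvd
    rcases lt_trichotomy k m with hkm | hkm | hkm
    · -- k < m : the sum is 2^k * (odd), not divisible by 2^(k+1)
      have hsplit : (2:ℕ) ^ m * b + 2 ^ k * c = 2 ^ k * (2 ^ (m - k) * b + c) := by
        rw [Nat.mul_add, ← mul_assoc, ← pow_add]
        congr 3
        omega
      rw [hsplit] at hdvd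
      have h2 : (2:ℕ) ^ (k + 1) ∣ 2 ^ k * (2 ^ (m - k) * b + c) :=
        dvd_trans (pow_dvd_pow 2 (by omega)) hdvd
      rw [pow_succ] at h2
      have h3 : 2 ∣ 2 ^ (m - k) * b + c := by
        obtain ⟨q, hq⟩ := h2
        refine ⟨q, Nat.eq_of_mul_eq_mul_left (pow_pos two_pos k) ?_⟩
        rw [hq]; ring
      have h4 : 2 ∣ 2 ^ (m - k) * b := Dvd.dvd.mul_right (dvd_pow_self 2 (by omega)) b
      generalize 2 ^ (m - k) * b = A at h3 h4
      omega
    · -- k = m : the sum is exactly 2^(m+1) * (odd), contradicting the parity of colors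
      subst hkm
      obtain ⟨w, hw1, hw2⟩ : ∃ w, b + c = 2 * w ∧ w % 2 = 1 := ⟨(b + c) / 2, by omega, by omega⟩
      have hfinal : (2:ℕ) ^ (k + 1) * w = 2 ^ j * d := by
        calc (2:ℕ) ^ (k + 1) * w = 2 ^ k * (2 * w) := by rw [pow_succ]; ring
          _ = 2 ^ k * b + 2 ^ k * c := by rw [← hw1, Nat.mul_add]
          _ = 2 ^ j * d := hcons
      have := pow_mul_odd_inj hw2 hd2 hfinal
      omega
    · -- k > m : the sum is 2^m * (odd), not divisible by 2^(m+1)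
      have hsplit : (2:ℕ) ^ m * b + 2 ^ k * c = 2 ^ m * (b + 2 ^ (k - m) * c) := by
        rw [Nat.mul_add, ← mul_assoc, ← pow_add]
        congr 3
        omega
      rw [hsplit, pow_succ] at hdvd
      have h3 : 2 ∣ b + 2 ^ (k - m) * c := by
        obtain ⟨q, hq⟩ := hdvd
        refine ⟨q, Nat.eq_of_mul_eq_mul_left (pow_pos two_pos m) ?_⟩
        rw [hq]; ring
      have h4 : 2 ∣ 2 ^ (k - m) * c := Dvd.dvd.mul_right (dvd_pow_self 2 (by omega)) c
      generalize 2 ^ (k - m) * c = A at h3 h4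
      omega
  -- Pigeonhole: some finite product of consecutive terms of `y` has length divisible by 2^(m+1).
  set N := 2 ^ (m + 1) with hN
  have hNpos : 0 < N := pow_pos two_pos _
  set L : ℕ → ℕ := fun j => ∑ i ∈ Finset.range j, (y.get i).length with hL
  have main : ∀ j k : ℕ, j < k → L j % N = L k % N → False := by
    intro j k hlt hmod
    have hw : pp (k - j - 1) (y.drop j) ∈ FP y := FP_drop_subset_FP y j (pp_mem _ _)
    obtain ⟨s, hs, heq⟩ := hy hw
    have hlen : (pp (k - j - 1) (y.drop j)).length
        = ∑ i ∈ Finset.range (k - j), (y.get (j + i)).length := by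
      rw [pp_length, show k - j - 1 + 1 = k - j from by omega]
      refine Finset.sum_congr rfl fun i _ => ?_
      rw [Stream'.get_drop, add_comm]
    have hsum : L j + (pp (k - j - 1) (y.drop j)).length = L k := by
      rw [hlen, hL]
      have := Finset.sum_range_add (fun i => (y.get i).length) j (k - j)
      rw [show j + (k - j) = k from by omega] at this
      simpa using this.symm
    have hdvd : N ∣ (pp (k - j - 1) (y.drop j)).length := by
      have h1 : L j ≤ L k := by omega
      have h2 := (Nat.modEq_iff_dvd' h1).1 hmod
      have h3 : L k - L j = (pp (k - j - 1) (y.drop j)).length := by omega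
      rwa [h3] at h2
    rw [← heq] at hdvd
    exact key s hs hdvd
  have pig : ∃ j ∈ Finset.range (N + 1), ∃ k ∈ Finset.range (N + 1),
      j ≠ k ∧ L j % N = L k % N := by
    apply Finset.exists_ne_map_eq_of_card_lt_of_maps_to (t := Finset.range N)
    · simp
    · intro a _
      exact Finset.mem_range.2 (Nat.mod_lt _ hNpos)
  obtain ⟨j, -, k, -, hjk, hmod⟩ := pig
  rcases hjk.lt_or_gt with h | h
  · exact main j k h hmod
  · exact main k j h hmod.symm

lemma length_pos' {α : Type*} (w : FreeSemigroup α) : 0 < w.length := by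
  unfold FreeSemigroup.length
  omega

end IPRegAux

/-- For any nonempty alphabet `α`, the free semigroup on `α` is IP-regular. -/
theorem ipRegular_freeSemigroup (α : Type*) [Nonempty α] :
    IPRegular (FreeSemigroup α) := by
  refine ⟨4, fun i => IPRegAux.cell α (![0, 0, 1, 1] i) (![1, 3, 1, 3] i),
    fun i => IPRegAux.strong_cell _ _, ?_⟩
  apply Set.eq_of_subset_of_subset
  · intro w _
    have hw : w.length ≠ 0 := (IPRegAux.length_pos' w).ne'
    obtain ⟨k, b, hb, heq⟩ := Nat.exists_eq_pow_mul_and_not_dvd hw 2 (by norm_num)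
    have hb2 : b % 2 = 1 := by omega
    have hk2 : k % 2 = 0 ∨ k % 2 = 1 := by omega
    have hb4 : b % 4 = 1 ∨ b % 4 = 3 := by omega
    rcases hk2 with hk2 | hk2 <;> rcases hb4 with hb4 | hb4
    · exact Set.mem_iUnion.2 ⟨0, k, b, heq, hb2, by simpa using hk2, by simpa using hb4⟩
    · exact Set.mem_iUnion.2 ⟨1, k, b, heq, hb2, by simpa using hk2, by simpa using hb4⟩
    · exact Set.mem_iUnion.2 ⟨2, k, b, heq, hb2, by simpa using hk2, by simpa using hb4⟩
    · exact Set.mem_iUnion.2 ⟨3, k, b, heq, hb2, by simpa using hk2, by simpa using hb4⟩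
  · intro w _
    simp only [Set.mem_compl_iff, Set.mem_setOf_eq]
    intro h
    have hlen := congrArg FreeSemigroup.length h
    rw [FreeSemigroup.length_mul] at hlen
    have := IPRegAux.length_pos' w
    omega
end

section
/- Let Λ be a meet-semilattice whose order is well-founded (every nonempty subset of Λ has a minimal element), regarded as a commutative semigroup under the meet operation ⊓. Then every nonprincipal strongly productive ultrafilter on Λ is regular. -/
/-- On a well-founded meet-semilattice `Λ`, regarded as a commutative semigroup under `⊓`,
every nonprincipal strongly productive ultrafilter is regular. -/
theorem semilattice_stronglyProductive_regular {Λ : Type*} [SemilatticeInf Λ]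
    [WellFoundedLT Λ] :
    letI : Semigroup Λ := { mul := (· ⊓ ·), mul_assoc := inf_assoc }
    ∀ p : Ultrafilter Λ, StronglyProductive p → (∀ a : Λ, p ≠ pure a) → RegularSP p := by
  letI : Semigroup Λ := { mul := (· ⊓ ·), mul_assoc := inf_assoc }
  intro p _hsp hnp
  by_cases hS : ∃ a : Λ, Set.Iic a ∈ p
  · obtain ⟨a, ha⟩ := hS
    obtain ⟨a₀, ha₀, hmin⟩ :=
      (IsWellFounded.wf (r := ((· < ·) : Λ → Λ → Prop))).has_min
        {b : Λ | Set.Iic b ∈ p} ⟨a, ha⟩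
    have hsingle : ({a₀} : Set Λ) ∉ p := by
      intro h
      obtain ⟨x, hx, hpx⟩ := Ultrafilter.eq_pure_of_finite_mem (Set.finite_singleton a₀) h
      exact hnp x hpx
    refine ⟨Set.Iic a₀ \ {a₀}, ?_, ?_⟩
    · exact Filter.inter_mem ha₀ ((Ultrafilter.compl_mem_iff_notMem).2 hsingle)
    · intro x hx himg
      have hIic : Set.Iic x.head ∈ p := by
        refine Filter.mem_of_superset himg ?_
        rintro z ⟨y, -, rfl⟩
        exact inf_le_left
      have hhead : x.head ∈ Set.Iic a₀ \ {a₀} := hx (Hindman.FP.head x)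
      exact hmin x.head hIic (lt_of_le_of_ne hhead.1 hhead.2)
  · refine ⟨Set.univ, Filter.univ_mem, ?_⟩
    intro x _ himg
    refine hS ⟨x.head, Filter.mem_of_superset himg ?_⟩
    rintro z ⟨y, -, rfl⟩
    exact inf_le_left
end
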